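/- Criterion for a point of nonzero curvature and nonzero tangential velocity (Lemma 4.1). Let (ρ,v) be a solution of the Riemann problem satisfying conditions (i)–(vii) of the admissible-structure Definition 3.1 and assumption (i) of the Main Theorem (the C¹/Lipschitz regularity near Γ^int). Assume: (a) Γ^int_1 = ∂Ω ∩ ∂Λ_j for some j ∈ {1,…,M}; (b) Γ^int_1 is not a segment of a straight line; in particular, denoting by P₁ and P₂ the endpoints of Γ^int_1, there exists P* ∈ closure(Γ^int_1) ∖ {P₁} with τ(P₁) ≠ ±τ(P*), where τ(·) is a unit tangent to Γ^int_1; (c) (v·τ)(P₁) ≠ 0. Then condition (viii) of Definition 3.1 holds: there exists a point P̂ in the relative interior of Γ^int_1 at which the curvature of Γ^int_1 is nonzero and (v·τ)(P̂) ≠ 0. -/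

import Mathlib

open MeasureTheory Set Filter
open scoped Topology NNReal ENNReal

noncomputable section

namespace CFX

/-- Points of the self-similar plane. -/
abbrev V2 : Type := ℝ × ℝ

/-- Euclidean dot product on `ℝ × ℝ`. -/
def dot2 (a b : V2) : ℝ := a.1 * b.1 + a.2 * b.2

/-- Euclidean norm on `ℝ × ℝ`. -/
def nrm (a : V2) : ℝ := Real.sqrt (a.1 ^ 2 + a.2 ^ 2)

/-- Partial derivative in the `i`-th coordinate direction. -/
def pd (i : Fin 2) (f : V2 → ℝ) (x : V2) : ℝ :=
  fderiv ℝ f x (if i = 0 then ((1 : ℝ), (0 : ℝ)) else ((0 : ℝ), (1 : ℝ)))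

/-- Gradient. -/
def grad (f : V2 → ℝ) (x : V2) : V2 := (pd 0 f x, pd 1 f x)

/-- Divergence of a vector field. -/
def divg (w : V2 → V2) (x : V2) : ℝ :=
  pd 0 (fun y => (w y).1) x + pd 1 (fun y => (w y).2) x

/-- Scalar curl (vorticity) of a planar vector field: `∂₁ w₂ - ∂₂ w₁`. -/
def curl (w : V2 → V2) (x : V2) : ℝ :=
  pd 0 (fun y => (w y).2) x - pd 1 (fun y => (w y).1) x

/-- Scalar curl computed with derivatives within a set (one-sided/trace version). -/
def curlWithin (S : Set V2) (w : V2 → V2) (x : V2) : ℝ :=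
  fderivWithin ℝ (fun y => (w y).2) S x ((1 : ℝ), (0 : ℝ))
    - fderivWithin ℝ (fun y => (w y).1) S x ((0 : ℝ), (1 : ℝ))

/-- Smooth compactly supported scalar test functions. -/
def IsTest (φ : V2 → ℝ) : Prop := ContDiff ℝ (⊤ : ℕ∞) φ ∧ HasCompactSupport φ

/-- Smooth compactly supported vector test functions. -/
def IsTestV (ζ : V2 → V2) : Prop := ContDiff ℝ (⊤ : ℕ∞) ζ ∧ HasCompactSupport ζ

/-- The `r`-neighborhood of a set. -/
def nbhd (r : ℝ) (Γ : Set V2) : Set V2 := {x | Metric.infDist x Γ < r}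

/-- Pressure `p(t) = t^γ/γ`. -/
def pres (γ t : ℝ) : ℝ := t ^ γ / γ

/-- Sound speed `c(t) = t^((γ-1)/2)`. -/
def sound (γ t : ℝ) : ℝ := t ^ ((γ - 1) / 2)

/-- Enthalpy `h(t) = (t^(γ-1) - 1)/(γ-1)`. -/
def enth (γ t : ℝ) : ℝ := (t ^ (γ - 1) - 1) / (γ - 1)

/-- Internal energy `e(t) = t^(γ-1)/(γ(γ-1))`. -/
def ener (γ t : ℝ) : ℝ := t ^ (γ - 1) / (γ * (γ - 1))

/-- `g` is a weak gradient of `f` on `U`. -/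
def WeakGrad (U : Set V2) (f : V2 → ℝ) (g : V2 → V2) : Prop :=
  ∀ φ : V2 → ℝ, IsTest φ → tsupport φ ⊆ U →
    (∫ x in U, f x * pd 0 φ x) = - ∫ x in U, (g x).1 * φ x ∧
    (∫ x in U, f x * pd 1 φ x) = - ∫ x in U, (g x).2 * φ x

/-- Membership in the Sobolev space `H¹(U)` for a scalar function. -/
def MemH1 (U : Set V2) (f : V2 → ℝ) : Prop :=
  MemLp f 2 (volume.restrict U) ∧
  ∃ g : V2 → V2, WeakGrad U f g ∧ MemLp g 2 (volume.restrict U)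

/-- Membership in `H¹(U)` for a planar vector field. -/
def MemH1V (U : Set V2) (w : V2 → V2) : Prop :=
  MemH1 U (fun x => (w x).1) ∧ MemH1 U (fun x => (w x).2)

/-- `f` has locally bounded variation on `U`. -/
def BVLocOn (f : V2 → ℝ) (U : Set V2) : Prop :=
  ∀ W : Set V2, IsOpen W → IsCompact (closure W) → closure W ⊆ U →
    ∃ C : ℝ, ∀ ζ : V2 → V2, IsTestV ζ → tsupport ζ ⊆ W → (∀ x, nrm (ζ x) ≤ 1) →
      |∫ x in U, f x * divg ζ x| ≤ C

/-- The interior integrand of the weak form of the self-similar momentum equation,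
    `∫_Λ (ρ v⊗v : Dζ − 3ρ v·ζ + p div ζ)`. -/
def momInt (γ : ℝ) (Λ : Set V2) (ρ : V2 → ℝ) (v : V2 → V2) (ζ : V2 → V2) : ℝ :=
  ∫ x in Λ,
    (ρ x * ((v x).1 * (v x).1 * pd 0 (fun y => (ζ y).1) x
          + (v x).1 * (v x).2 * pd 0 (fun y => (ζ y).2) x
          + (v x).2 * (v x).1 * pd 1 (fun y => (ζ y).1) x
          + (v x).2 * (v x).2 * pd 1 (fun y => (ζ y).2) x)
      - 3 * ρ x * dot2 (v x) (ζ x) + pres γ (ρ x) * divg ζ x)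

/-- Entropy solution of the self-similar isentropic Euler system on `Λ` with
    slip boundary condition, where the boundary integral `∫_{∂Λ} p ζ·ν dl`
    is given by the functional `bd` (Definition 2.4). -/
structure WeakSol (γ : ℝ) (Λ : Set V2) (ρ : V2 → ℝ) (v : V2 → V2)
    (bd : (V2 → V2) → ℝ) : Prop where
  bddρ : MemLp ρ ⊤ (volume.restrict Λ)
  bddv : MemLp v ⊤ (volume.restrict Λ)
  bv : ∃ r > 0, BVLocOn ρ (Λ ∩ nbhd r (frontier Λ))
  mass : ∀ φ, IsTest φ →
    (∫ x in Λ, (ρ x * dot2 (v x) (grad φ x) - 2 * ρ x * φ x)) = 0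
  momentum : ∀ ζ, IsTestV ζ → momInt γ Λ ρ v ζ - bd ζ = 0
  entropy : ∀ ψ, IsTest ψ → tsupport ψ ⊆ Λ → (∀ x, 0 ≤ ψ x) →
    0 ≤ ∫ x in Λ,
      ((2⁻¹ * ρ x * nrm (v x) ^ 2 + ρ x * ener γ (ρ x) + pres γ (ρ x)) *
          dot2 (v x) (grad ψ x)
        - 2 * (ρ x * nrm (v x) ^ 2 + ρ x * ener γ (ρ x) + pres γ (ρ x)) * ψ x)

/-- A self-similar wedge domain `{θ⁻ < θ < θ⁺}` in polar coordinates. -/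
def wedgeSet (θm θp : ℝ) : Set V2 :=
  {x | ∃ r θ : ℝ, 0 < r ∧ θm < θ ∧ θ < θp ∧ x = (r * Real.cos θ, r * Real.sin θ)}

/-- Boundary integral `∫ p ζ·ν dl` along the ray `{P + t d : t > 0}` (unit direction `d`),
    with constant unit normal `ν`, computed by arclength. -/
def rayBd (γ : ℝ) (ρ : V2 → ℝ) (P d ν : V2) (ζ : V2 → V2) : ℝ :=
  ∫ t in Ioi (0 : ℝ), pres γ (ρ (P + t • d)) * dot2 (ζ (P + t • d)) ν

/-- Boundary integral of the wedge `{θm < θ < θp}`: the two boundary rays with their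
outer unit normals. -/
def wedgeBd (γ θm θp : ℝ) (ρ : V2 → ℝ) (ζ : V2 → V2) : ℝ :=
  rayBd γ ρ (0, 0) (Real.cos θm, Real.sin θm) (Real.sin θm, -Real.cos θm) ζ +
  rayBd γ ρ (0, 0) (Real.cos θp, Real.sin θp) (-Real.sin θp, Real.cos θp) ζ

/-- The boundary `∂Ω` is Lipschitz: locally a Lipschitz subgraph. -/
def LipschitzBdry (Ω : Set V2) : Prop :=
  ∀ x ∈ frontier Ω, ∃ r > 0, ∃ L : ℝ≥0, ∃ u w : V2, ∃ φ : ℝ → ℝ,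
    dot2 u w = 0 ∧ nrm u = 1 ∧ nrm w = 1 ∧ LipschitzWith L φ ∧
    Ω ∩ Metric.ball x r = {y ∈ Metric.ball x r | dot2 (y - x) w < φ (dot2 (y - x) u)}

/-- The Rankine–Hugoniot conditions for a shock with the entropy-type sign conditions
`(v⁺·ν)(v⁻·ν) > 0` and `[ρ] ≠ 0` (see (2.10)–(2.12)). -/
def ShockJump (γ ρp : ℝ) (vp : V2) (ρm : ℝ) (vm ν : V2) : Prop :=
  ρp * dot2 vp ν = ρm * dot2 vm ν ∧
  (ρp * dot2 vp ν) • vp + (pres γ ρp) • ν = (ρm * dot2 vm ν) • vm + (pres γ ρm) • ν ∧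
  0 < dot2 vp ν * dot2 vm ν ∧ ρp ≠ ρm

end CFX

namespace CFX

/-- An entropy solution of the Riemann problem of admissible structure
(Definition 3.1, conditions (i)–(vii)), together with its Ω-side boundary
traces and outer unit normals along the interior boundary `Γ^int`. -/
structure RiemannSol where
  /-- adiabatic exponent -/
  γ : ℝ
  hγ : 1 < γ
  /-- the self-similar (wedge) domain -/
  Λ : Set V2
  hΛopen : IsOpen Λ
  /-- density -/
  ρ : V2 → ℝ
  /-- pseudo-velocity -/
  v : V2 → V2
  /-- `Λ` is the whole plane or a wedge, and `(ρ, v)` is an entropy solution with the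
  slip boundary condition (Definition 2.4); in the wedge case the boundary
  integral in the weak momentum equation runs over the two boundary rays. -/
  sol : (Λ = univ ∧ WeakSol γ Λ ρ v (fun _ => 0)) ∨
    (∃ θm θp : ℝ, θm < θp ∧ θp ≤ θm + 2 * Real.pi ∧ Λ = wedgeSet θm θp ∧
      WeakSol γ Λ ρ v (wedgeBd γ θm θp ρ))
  -- (i): decomposition into the subsonic domain and finitely many constant states
  Ω : Set V2
  M : ℕ
  hM : 1 ≤ M
  Λc : Fin M → Set V2
  ρc : Fin M → ℝ
  uc : Fin M → V2
  hΩopen : IsOpen Ω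
  hΩbdd : Bornology.IsBounded Ω
  hΩconn : IsConnected Ω
  hΩsub : Ω ⊆ Λ
  hΛcopen : ∀ i, IsOpen (Λc i)
  hΛcconn : ∀ i, IsConnected (Λc i)
  hΛcdisj : ∀ i j, i ≠ j → Disjoint (Λc i) (Λc j)
  hdecomp : closure Λ \ Ω = ⋃ i, closure (Λc i)
  hρcpos : ∀ i, 0 < ρc i
  hconst : ∀ i, ∀ x ∈ Λc i, ρ x = ρc i ∧ v x = uc i - x
  -- (ii): adjacent constant states differ
  hdistinct : ∀ i j, i ≠ j → (frontier (Λc i) ∩ frontier (Λc j) ∩ Λ).Nonempty →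
    ρc i ≠ ρc j ∨ uc i ≠ uc j
  -- (iii): ∂Ω is Lipschitz
  hLip : LipschitzBdry Ω
  -- (iv): Γ^ext = ∂Ω ∩ ∂Λ is a finite disjoint union of straight segments
  N1 : ℕ
  A : Fin N1 → V2
  B : Fin N1 → V2
  hN1 : (frontier Ω ∩ frontier Λ).Nonempty → 1 ≤ N1
  hAB : ∀ i, A i ≠ B i
  hΓext : frontier Ω ∩ frontier Λ = ⋃ i, closure (openSegment ℝ (A i) (B i))
  hsegdisj : ∀ i j, i ≠ j →
    Disjoint (openSegment ℝ (A i) (B i)) (openSegment ℝ (A j) (B j))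
  hsegmeet : ∀ i j, i ≠ j →
    ∀ Q ∈ closure (openSegment ℝ (A i) (B i)) ∩ closure (openSegment ℝ (A j) (B j)),
      ((Q = A i ∨ Q = B i) ∧ (Q = A j ∨ Q = B j)) ∧
      ∀ P ∈ ({A i, B i} : Set V2) \ {Q}, ∀ P' ∈ ({A j, B j} : Set V2) \ {Q},
        ¬ SameRay ℝ (P - Q) (P' - Q)
  hOnePair : ∀ i j k l : Fin N1, i ≠ j → k ≠ l →
    (0 : V2) ∈ closure (openSegment ℝ (A i) (B i)) ∩ closure (openSegment ℝ (A j) (B j)) →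
    (0 : V2) ∈ closure (openSegment ℝ (A k) (B k)) ∩ closure (openSegment ℝ (A l) (B l)) →
    ({i, j} : Set (Fin N1)) = {k, l}
  -- (v): Γ^int = ∂Ω ∩ Λ is a finite disjoint union of arclength-parametrized curve
  -- segments, C¹ up to the endpoints and C² in the relative interior
  N2 : ℕ
  hN2 : 1 ≤ N2
  len : Fin N2 → ℝ
  hlen : ∀ i, 0 < len i
  Γc : Fin N2 → ℝ → V2
  hΓC1 : ∀ i, ContDiffOn ℝ 1 (Γc i) (Icc 0 (len i))
  hΓC2 : ∀ i, ContDiffOn ℝ 2 (Γc i) (Ioo 0 (len i))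
  hΓinj : ∀ i, InjOn (Γc i) (Icc 0 (len i))
  hΓunit : ∀ i, ∀ t ∈ Ioo 0 (len i), nrm (deriv (Γc i) t) = 1
  hΓint : frontier Ω ∩ Λ = ⋃ i, Γc i '' Ioo 0 (len i)
  hΓdisj : ∀ i j, i ≠ j → Disjoint (Γc i '' Ioo 0 (len i)) (Γc j '' Ioo 0 (len j))
  hΓcl : closure (frontier Ω ∩ Λ) = ⋃ i, Γc i '' Icc 0 (len i)
  hP0 : (0 : V2) ∉ closure (frontier Ω ∩ Λ)
  -- (vi): v is continuous on N_σ(Γ^int) ∩ closure Ω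
  σ0 : ℝ
  hσ0 : 0 < σ0
  hvcont : ContinuousOn v (nbhd σ0 (frontier Ω ∩ Λ) ∩ closure Ω)
  -- Ω-side boundary traces of ρ and v on Γ^int
  ρΓ : V2 → ℝ
  vΓ : V2 → V2
  hvΓ : ∀ P ∈ closure (frontier Ω ∩ Λ), Tendsto v (𝓝[Ω] P) (𝓝 (vΓ P))
  hρΓ : ∀ P ∈ frontier Ω ∩ Λ, Tendsto ρ (𝓝[Ω] P) (𝓝 (ρΓ P))
  -- outer unit normals along the curves Γ^int_i
  νΓ : Fin N2 → ℝ → V2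
  hνunit : ∀ i, ∀ t ∈ Ioo 0 (len i),
    nrm (νΓ i t) = 1 ∧ dot2 (νΓ i t) (deriv (Γc i) t) = 0
  hνouter : ∀ i, ∀ t ∈ Ioo 0 (len i), ∀ᶠ s in 𝓝[>] (0 : ℝ),
    Γc i t - s • νΓ i t ∈ Ω ∧ Γc i t + s • νΓ i t ∉ closure Ω
  -- (vii): Γ^int_1 is a shock, with v·ν ≤ -C⁻¹ on it and v·ν ≤ 0 on the others
  Cν : ℝ
  hCν : 0 < Cν
  hshock : ∃ j : Fin M, ∀ t ∈ Ioo 0 (len ⟨0, Nat.lt_of_lt_of_le Nat.zero_lt_one hN2⟩),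
    (∀ᶠ s in 𝓝[>] (0 : ℝ),
      Γc ⟨0, Nat.lt_of_lt_of_le Nat.zero_lt_one hN2⟩ t +
        s • νΓ ⟨0, Nat.lt_of_lt_of_le Nat.zero_lt_one hN2⟩ t ∈ Λc j) ∧
    ShockJump γ (ρΓ (Γc ⟨0, Nat.lt_of_lt_of_le Nat.zero_lt_one hN2⟩ t))
      (vΓ (Γc ⟨0, Nat.lt_of_lt_of_le Nat.zero_lt_one hN2⟩ t))
      (ρc j) (uc j - Γc ⟨0, Nat.lt_of_lt_of_le Nat.zero_lt_one hN2⟩ t)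
      (νΓ ⟨0, Nat.lt_of_lt_of_le Nat.zero_lt_one hN2⟩ t)
  hvν1 : ∀ t ∈ Ioo 0 (len ⟨0, Nat.lt_of_lt_of_le Nat.zero_lt_one hN2⟩),
    dot2 (vΓ (Γc ⟨0, Nat.lt_of_lt_of_le Nat.zero_lt_one hN2⟩ t))
      (νΓ ⟨0, Nat.lt_of_lt_of_le Nat.zero_lt_one hN2⟩ t) ≤ -Cν⁻¹
  hvν : ∀ i, i ≠ ⟨0, Nat.lt_of_lt_of_le Nat.zero_lt_one hN2⟩ →
    ∀ t ∈ Ioo 0 (len i), dot2 (vΓ (Γc i t)) (νΓ i t) ≤ 0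

namespace RiemannSol

variable (S : RiemannSol)

/-- the index of the shock curve `Γ^int_1` -/
def i1 : Fin S.N2 := ⟨0, Nat.lt_of_lt_of_le Nat.zero_lt_one S.hN2⟩

/-- the interior boundary `Γ^int = ∂Ω ∩ Λ` -/
def Γint : Set V2 := frontier S.Ω ∩ S.Λ

/-- the shock curve `Γ^int_1` -/
def Γ1 : Set V2 := S.Γc S.i1 '' Ioo 0 (S.len S.i1)

/-- the set `∂_p Γ^int` of endpoints of the curve segments `Γ^int_i` -/
def endpts : Set V2 := ⋃ i, {S.Γc i 0, S.Γc i (S.len i)}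

/-- Condition (viii) of Definition 3.1: a point `P̂` in the relative interior of the
shock `Γ^int_1` with nonzero curvature and nonzero tangential velocity. -/
def CurvaturePoint : Prop :=
  ∃ t ∈ Ioo 0 (S.len S.i1), deriv (deriv (S.Γc S.i1)) t ≠ 0 ∧
    dot2 (S.vΓ (S.Γc S.i1 t)) (deriv (S.Γc S.i1) t) ≠ 0

/-- Assumption (i) of the Main Theorem: `(ρ, v)` is `C¹` on
`(N_σ(Γ^int) ∩ closure Ω) \ ∂_p Γ^int` and Lipschitz on `N_σ(Γ^int) ∩ closure Ω`. -/
def RegNearΓint : Prop :=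
  ∃ σ > 0,
    (ContDiffOn ℝ 1 S.ρ ((nbhd σ S.Γint ∩ closure S.Ω) \ S.endpts) ∧
     ContDiffOn ℝ 1 S.v ((nbhd σ S.Γint ∩ closure S.Ω) \ S.endpts)) ∧
    (∃ K : ℝ≥0, LipschitzOnWith K S.ρ (nbhd σ S.Γint ∩ closure S.Ω) ∧
      LipschitzOnWith K S.v (nbhd σ S.Γint ∩ closure S.Ω))

/-- Assumption (ii) of the Main Theorem: `|v| ≤ C₀` and `C₀⁻¹ ≤ ρ ≤ C₀` in `Ω`. -/
def Bounds (C₀ : ℝ) : Prop :=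
  1 ≤ C₀ ∧ ∀ x ∈ S.Ω, nrm (S.v x) ≤ C₀ ∧ C₀⁻¹ ≤ S.ρ x ∧ S.ρ x ≤ C₀

/-- Assumption (iii) of the Main Theorem: the flow is subsonic on `Γ^int_1`
from the Ω-side. -/
def SubsonicOnΓ1 : Prop :=
  ∀ t ∈ Ioo 0 (S.len S.i1),
    nrm (S.vΓ (S.Γc S.i1 t)) < sound S.γ (S.ρΓ (S.Γc S.i1 t))

end RiemannSol

end CFX

namespace CFX

private lemma tendsto_dot2 {α : Type*} {l : Filter α} {p q : α → V2} {a b : V2}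
    (hp : Tendsto p l (𝓝 a)) (hq : Tendsto q l (𝓝 b)) :
    Tendsto (fun t => dot2 (p t) (q t)) l (𝓝 (dot2 a b)) := by
  have h1 : Tendsto (fun t => (p t).1) l (𝓝 a.1) := (continuous_fst.tendsto a).comp hp
  have h2 : Tendsto (fun t => (q t).1) l (𝓝 b.1) := (continuous_fst.tendsto b).comp hq
  have h3 : Tendsto (fun t => (p t).2) l (𝓝 a.2) := (continuous_snd.tendsto a).comp hp
  have h4 : Tendsto (fun t => (q t).2) l (𝓝 b.2) := (continuous_snd.tendsto b).comp hq
  exact (h1.mul h2).add (h3.mul h4)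

private lemma continuousOn_dot2 {s : Set ℝ} {p q : ℝ → V2} (hp : ContinuousOn p s)
    (hq : ContinuousOn q s) : ContinuousOn (fun t => dot2 (p t) (q t)) s :=
  fun x hx => tendsto_dot2 (hp x hx) (hq x hx)

private lemma hasDerivAt_dot2 {p q : ℝ → V2} {p' q' : V2} {t : ℝ}
    (hp : HasDerivAt p p' t) (hq : HasDerivAt q q' t) :
    HasDerivAt (fun s => dot2 (p s) (q s)) (dot2 p' (q t) + dot2 (p t) q') t := by
  have h1 : HasDerivAt (fun s => (p s).1) p'.1 t := by
    exact hp.fst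
  have h2 : HasDerivAt (fun s => (q s).1) q'.1 t := by
    exact hq.fst
  have h3 : HasDerivAt (fun s => (p s).2) p'.2 t := by
    exact hp.snd
  have h4 : HasDerivAt (fun s => (q s).2) q'.2 t := by
    exact hq.snd
  have h := (h1.mul h2).add (h3.mul h4)
  refine h.congr_deriv ?_
  simp only [dot2]; ring

private lemma vGamma_lip (S : RiemannSol) {K : ℝ≥0} {σ : ℝ} (hσ : 0 < σ)
    (hlip : LipschitzOnWith K S.v (nbhd σ S.Γint ∩ closure S.Ω))
    {P Q : V2} (hP : P ∈ closure S.Γint) (hQ : Q ∈ closure S.Γint) :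
    dist (S.vΓ P) (S.vΓ Q) ≤ (K : ℝ) * dist P Q := by
  have hsubfr : closure S.Γint ⊆ frontier S.Ω :=
    closure_minimal inter_subset_left isClosed_frontier
  have hPΩ : P ∈ closure S.Ω := frontier_subset_closure (hsubfr hP)
  have hQΩ : Q ∈ closure S.Ω := frontier_subset_closure (hsubfr hQ)
  obtain ⟨x, hxΩ, hx⟩ := mem_closure_iff_seq_limit.mp hPΩ
  obtain ⟨y, hyΩ, hy⟩ := mem_closure_iff_seq_limit.mp hQΩ
  have hvx : Tendsto (fun n => S.v (x n)) atTop (𝓝 (S.vΓ P)) :=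
    (S.hvΓ P hP).comp (tendsto_nhdsWithin_iff.mpr ⟨hx, Eventually.of_forall hxΩ⟩)
  have hvy : Tendsto (fun n => S.v (y n)) atTop (𝓝 (S.vΓ Q)) :=
    (S.hvΓ Q hQ).comp (tendsto_nhdsWithin_iff.mpr ⟨hy, Eventually.of_forall hyΩ⟩)
  have hmem : ∀ (z : ℕ → V2) (Z : V2), (∀ n, z n ∈ S.Ω) → Tendsto z atTop (𝓝 Z) →
      Z ∈ closure S.Γint → ∀ᶠ n in atTop, z n ∈ nbhd σ S.Γint ∩ closure S.Ω := by
    intro z Z hzΩ hz hZ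
    have hd := tendsto_iff_dist_tendsto_zero.mp hz
    filter_upwards [hd.eventually_lt_const hσ] with n hn
    refine ⟨?_, subset_closure (hzΩ n)⟩
    show Metric.infDist (z n) S.Γint < σ
    calc Metric.infDist (z n) S.Γint
        ≤ Metric.infDist Z S.Γint + dist (z n) Z := Metric.infDist_le_infDist_add_dist
      _ = dist (z n) Z := by rw [Metric.infDist_zero_of_mem_closure hZ, zero_add]
      _ < σ := hn
  refine le_of_tendsto_of_tendsto (hvx.dist hvy) (tendsto_const_nhds.mul (hx.dist hy)) ?_
  filter_upwards [hmem x P hxΩ hx hP, hmem y Q hyΩ hy hQ] with n h1 h2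
  exact hlip.dist_le_mul _ h1 _ h2

/-- **Lemma 4.1 (Criterion for a point of nonzero curvature and nonzero tangential
velocity).** Let `(ρ, v)` satisfy conditions (i)–(vii) of Definition 3.1 and the
`C¹`/Lipschitz regularity assumption (i) of the Main Theorem.  Assume:
(a) `Γ^int_1 = ∂Ω ∩ ∂Λ_j` for some `j`;
(b) `Γ^int_1` is not a straight segment; in particular there is a point
`P* ∈ closure Γ^int_1 ∖ {P₁}` whose unit tangent differs from `±τ(P₁)`,
where `P₁ = Γc 0` is an endpoint;
(c) `(v·τ)(P₁) ≠ 0`.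
Then condition (viii) of Definition 3.1 holds: there is a point `P̂` in the relative
interior of `Γ^int_1` with nonzero curvature and nonzero tangential velocity. -/
theorem curvature_point_criterion (S : RiemannSol) (hreg : S.RegNearΓint)
    (ha : ∃ j : Fin S.M, S.Γ1 = frontier S.Ω ∩ frontier (S.Λc j))
    (hb : (¬ ∃ a b : V2, S.Γc S.i1 '' Icc 0 (S.len S.i1) ⊆ segment ℝ a b) ∧
      ∃ t ∈ Ioc 0 (S.len S.i1),
        derivWithin (S.Γc S.i1) (Icc 0 (S.len S.i1)) t ≠
          derivWithin (S.Γc S.i1) (Icc 0 (S.len S.i1)) 0 ∧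
        derivWithin (S.Γc S.i1) (Icc 0 (S.len S.i1)) t ≠
          -derivWithin (S.Γc S.i1) (Icc 0 (S.len S.i1)) 0)
    (hc : dot2 (S.vΓ (S.Γc S.i1 0))
        (derivWithin (S.Γc S.i1) (Icc 0 (S.len S.i1)) 0) ≠ 0) :
    S.CurvaturePoint := by
  classical
  simp only [RiemannSol.RegNearΓint] at hreg
  obtain ⟨σ, hσ, -, K, -, hlipv⟩ := hreg
  obtain ⟨j, hjraw⟩ := S.hshock
  by_contra hK
  simp only [RiemannSol.CurvaturePoint] at hK
  push_neg at hK
  set L : ℝ := S.len S.i1 with hLdef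
  set Γ : ℝ → V2 := S.Γc S.i1 with hΓdef
  set τ : ℝ → V2 := derivWithin Γ (Icc 0 L) with hτdef
  set u : V2 := S.uc j with hudef
  have hL0 : 0 < L := S.hlen S.i1
  have hC2 : ContDiffOn ℝ 2 Γ (Ioo 0 L) := S.hΓC2 S.i1
  have hC1 : ContDiffOn ℝ 1 Γ (Icc 0 L) := S.hΓC1 S.i1
  have hd1 : DifferentiableOn ℝ Γ (Ioo 0 L) := hC2.differentiableOn (by norm_num)
  have hdΓ : ∀ t ∈ Ioo 0 L, HasDerivAt Γ (deriv Γ t) t := fun t ht =>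
    (hd1.differentiableAt (isOpen_Ioo.mem_nhds ht)).hasDerivAt
  have hC1' : ContDiffOn ℝ 1 (deriv Γ) (Ioo 0 L) :=
    hC2.deriv_of_isOpen isOpen_Ioo (by norm_num)
  have hd2 : DifferentiableOn ℝ (deriv Γ) (Ioo 0 L) := hC1'.differentiableOn (by norm_num)
  have hdd : ∀ t ∈ Ioo 0 L, HasDerivAt (deriv Γ) (deriv (deriv Γ) t) t := fun t ht =>
    (hd2.differentiableAt (isOpen_Ioo.mem_nhds ht)).hasDerivAt
  have hcont2 : ContinuousOn (deriv (deriv Γ)) (Ioo 0 L) :=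
    hC1'.continuousOn_deriv_of_isOpen isOpen_Ioo le_rfl
  have hcontΓ : ContinuousOn Γ (Icc 0 L) := hC1.continuousOn
  have hτcont : ContinuousOn τ (Icc 0 L) :=
    hC1.continuousOn_derivWithin (uniqueDiffOn_Icc hL0) le_rfl
  have hττ : ∀ t ∈ Ioo 0 L, τ t = deriv Γ t := fun t ht =>
    derivWithin_of_mem_nhds (Icc_mem_nhds ht.1 ht.2)
  have hdot1 : ∀ t ∈ Ioo 0 L, dot2 (deriv Γ t) (deriv Γ t) = 1 := by
    intro t ht
    have h' : Real.sqrt ((deriv Γ t).1 ^ 2 + (deriv Γ t).2 ^ 2) = 1 := S.hΓunit S.i1 t ht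
    have h2 := Real.sqrt_eq_one.mp h'
    simp only [dot2]
    linear_combination h2
  have hRH : ∀ t ∈ Ioo 0 L,
      dot2 (S.vΓ (Γ t)) (deriv Γ t) = dot2 (u - Γ t) (deriv Γ t) := by
    intro t ht
    have hSJ : ShockJump S.γ (S.ρΓ (Γ t)) (S.vΓ (Γ t)) (S.ρc j) (u - Γ t) (S.νΓ S.i1 t) :=
      (hjraw t ht).2
    simp only [ShockJump] at hSJ
    obtain ⟨e1, e2, e3, -⟩ := hSJ
    have hν0 : dot2 (S.νΓ S.i1 t) (deriv Γ t) = 0 := (S.hνunit S.i1 t ht).2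
    have hvm : dot2 (u - Γ t) (S.νΓ S.i1 t) ≠ 0 := by
      intro h; rw [h, mul_zero] at e3; exact lt_irrefl 0 e3
    have hm : S.ρc j * dot2 (u - Γ t) (S.νΓ S.i1 t) ≠ 0 :=
      mul_ne_zero (S.hρcpos j).ne' hvm
    apply mul_left_cancel₀ hm
    have h1 := congrArg Prod.fst e2
    have h2 := congrArg Prod.snd e2
    simp only [Prod.fst_add, Prod.snd_add, Prod.smul_fst, Prod.smul_snd, smul_eq_mul] at h1 h2
    simp only [dot2] at e1 h1 h2 hν0 ⊢
    linear_combination (deriv Γ t).1 * h1 + (deriv Γ t).2 * h2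
      - ((S.vΓ (Γ t)).1 * (deriv Γ t).1 + (S.vΓ (Γ t)).2 * (deriv Γ t).2) * e1
      + (pres S.γ (S.ρc j) - pres S.γ (S.ρΓ (Γ t))) * hν0
  set E : Set ℝ := Ioo 0 L ∩ (fun t => deriv (deriv Γ) t) ⁻¹' ({(0 : V2)}ᶜ) with hEdef
  have hEsub : E ⊆ Ioo 0 L := inter_subset_left
  have hEopen : IsOpen E := hcont2.isOpen_inter_preimage isOpen_Ioo isOpen_compl_singleton
  have hmemE : ∀ {x : ℝ}, x ∈ E ↔ x ∈ Ioo 0 L ∧ deriv (deriv Γ) x ≠ 0 := by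
    intro x
    constructor
    · intro hx; exact ⟨hx.1, hx.2⟩
    · intro hx; exact ⟨hx.1, hx.2⟩
  have hf0E : ∀ x ∈ E, dot2 (u - Γ x) (deriv Γ x) = 0 := by
    intro x hx
    obtain ⟨hx1, hx2⟩ := hmemE.mp hx
    rw [← hRH x hx1]
    exact hK x hx1 hx2
  rcases eq_empty_or_nonempty E with hE | hE
  · -- no curvature anywhere : the tangent is constant, contradicting (b)
    have hzero : ∀ t ∈ Ioo 0 L, deriv (deriv Γ) t = 0 := by
      intro t ht
      by_contra hne
      exact (eq_empty_iff_forall_notMem.mp hE t) (hmemE.mpr ⟨ht, hne⟩)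
    have hfz : ∀ z ∈ Ioo 0 L, fderivWithin ℝ (deriv Γ) (Ioo 0 L) z = 0 := by
      intro z hz
      rw [fderivWithin_of_isOpen isOpen_Ioo hz]
      have h0 : HasDerivAt (deriv Γ) 0 z := by
        have h := hdd z hz; rwa [hzero z hz] at h
      have h1 := (hasDerivAt_iff_hasFDerivAt.mp h0).fderiv
      rw [h1]
      ext
      · simp
      · simp
    have hconst : ∀ x ∈ Ioo 0 L, ∀ y ∈ Ioo 0 L, deriv Γ x = deriv Γ y := fun x hx y hy =>
      (convex_Ioo 0 L).is_const_of_fderivWithin_eq_zero hd2 hfz hx hy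
    have hhalf : L / 2 ∈ Ioo 0 L := ⟨by linarith, by linarith⟩
    have hτconst : ∀ t ∈ Ioo 0 L, τ t = deriv Γ (L / 2) := fun t ht =>
      (hττ t ht).trans (hconst t ht _ hhalf)
    haveI h0ne : (𝓝[Ioo 0 L] (0 : ℝ)).NeBot := by
      refine mem_closure_iff_nhdsWithin_neBot.mp ?_
      rw [closure_Ioo hL0.ne]; exact ⟨le_rfl, hL0.le⟩
    haveI hLne : (𝓝[Ioo 0 L] L).NeBot := by
      refine mem_closure_iff_nhdsWithin_neBot.mp ?_
      rw [closure_Ioo hL0.ne]; exact ⟨hL0.le, le_rfl⟩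
    have hτ0 : τ 0 = deriv Γ (L / 2) := by
      refine tendsto_nhds_unique ((hτcont 0 ⟨le_rfl, hL0.le⟩).mono Ioo_subset_Icc_self) ?_
      exact Tendsto.congr' (eventually_nhdsWithin_of_forall fun x hx => (hτconst x hx).symm)
        tendsto_const_nhds
    have hτL : τ L = deriv Γ (L / 2) := by
      refine tendsto_nhds_unique ((hτcont L ⟨hL0.le, le_rfl⟩).mono Ioo_subset_Icc_self) ?_
      exact Tendsto.congr' (eventually_nhdsWithin_of_forall fun x hx => (hτconst x hx).symm)
        tendsto_const_nhds
    obtain ⟨t₀, ht₀, hne1, -⟩ := hb.2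
    have ht0τ : τ t₀ = deriv Γ (L / 2) := by
      rcases eq_or_lt_of_le ht₀.2 with h | h
      · rw [h]; exact hτL
      · exact hτconst t₀ ⟨ht₀.1, h⟩
    exact hne1 (ht0τ.trans hτ0.symm)
  · -- there is curvature somewhere
    set m : ℝ := sInf E with hmdef
    have hbdd : BddBelow E := ⟨0, fun x hx => (hEsub hx).1.le⟩
    have hmcl : m ∈ closure E := csInf_mem_closure hE hbdd
    obtain ⟨t₁, ht₁⟩ := hE
    have hm0 : 0 ≤ m := le_csInf ⟨t₁, ht₁⟩ fun x hx => (hEsub hx).1.le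
    have hmL : m < L := lt_of_le_of_lt (csInf_le hbdd ht₁) (hEsub ht₁).2
    have hGE : ∀ x ∈ E, dot2 (u - Γ x) (deriv (deriv Γ) x) = 1 := by
      intro x hx
      have hx1 : x ∈ Ioo 0 L := hEsub hx
      have hev : (fun s => dot2 (u - Γ s) (deriv Γ s)) =ᶠ[𝓝 x] fun _ => (0 : ℝ) := by
        filter_upwards [hEopen.mem_nhds hx] with y hy
        exact hf0E y hy
      have h0 : HasDerivAt (fun s => dot2 (u - Γ s) (deriv Γ s)) 0 x :=
        hev.hasDerivAt_iff.mpr (hasDerivAt_const x 0)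
      have h1 : HasDerivAt (fun s => dot2 (u - Γ s) (deriv Γ s))
          (dot2 (-(deriv Γ x)) (deriv Γ x) + dot2 (u - Γ x) (deriv (deriv Γ) x)) x :=
        hasDerivAt_dot2 ((hdΓ x hx1).const_sub u) (hdd x hx1)
      have h2 := h0.unique h1
      have h3 := hdot1 x hx1
      simp only [dot2, Prod.fst_neg, Prod.snd_neg] at h2 h3 ⊢
      linear_combination -h2 + h3
    rcases eq_or_lt_of_le hm0 with hmeq | hmpos
    · -- the curvature set accumulates at the endpoint : contradiction with (c)
      haveI h0Ene : (𝓝[E] (0 : ℝ)).NeBot := by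
        refine mem_closure_iff_nhdsWithin_neBot.mp ?_
        rw [hmeq]; exact hmcl
      have hA0mem : (0 : ℝ) ∈ Icc 0 L := ⟨le_rfl, hL0.le⟩
      have hAcont : ContinuousOn (fun t => dot2 (u - Γ t) (τ t)) (Icc 0 L) :=
        continuousOn_dot2 (continuousOn_const.sub hcontΓ) hτcont
      have hA00 : dot2 (u - Γ 0) (τ 0) = 0 := by
        refine tendsto_nhds_unique
          ((hAcont 0 hA0mem).mono (hEsub.trans Ioo_subset_Icc_self)) ?_
        refine Tendsto.congr' (eventually_nhdsWithin_of_forall fun x hx => ?_)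
          tendsto_const_nhds
        show (0 : ℝ) = dot2 (u - Γ x) (τ x)
        rw [hττ x (hEsub hx)]
        exact (hf0E x hx).symm
      have hΓmem : ∀ t ∈ Icc 0 L, Γ t ∈ closure S.Γint := by
        intro t ht
        show Γ t ∈ closure (frontier S.Ω ∩ S.Λ)
        rw [S.hΓcl]
        exact mem_iUnion_of_mem S.i1 (mem_image_of_mem _ ht)
      haveI h0Ioo : (𝓝[Ioo 0 L] (0 : ℝ)).NeBot := by
        refine mem_closure_iff_nhdsWithin_neBot.mp ?_
        rw [closure_Ioo hL0.ne]; exact ⟨le_rfl, hL0.le⟩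
      have hvΓtend : Tendsto (fun t => S.vΓ (Γ t)) (𝓝[Ioo 0 L] (0 : ℝ)) (𝓝 (S.vΓ (Γ 0))) := by
        rw [tendsto_iff_dist_tendsto_zero]
        have hΓtend : Tendsto Γ (𝓝[Ioo 0 L] (0 : ℝ)) (𝓝 (Γ 0)) :=
          (hcontΓ 0 hA0mem).mono Ioo_subset_Icc_self
        have hdist : Tendsto (fun t => (K : ℝ) * dist (Γ t) (Γ 0))
            (𝓝[Ioo 0 L] (0 : ℝ)) (𝓝 0) := by
          have h := tendsto_iff_dist_tendsto_zero.mp hΓtend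
          simpa using tendsto_const_nhds.mul h
        refine squeeze_zero' (Eventually.of_forall fun t => dist_nonneg) ?_ hdist
        refine eventually_nhdsWithin_of_forall fun x hx => ?_
        exact vGamma_lip S hσ hlipv (hΓmem x (Ioo_subset_Icc_self hx)) (hΓmem 0 hA0mem)
      have hA0c : dot2 (u - Γ 0) (τ 0) = dot2 (S.vΓ (Γ 0)) (τ 0) := by
        have t2 : Tendsto (fun t => dot2 (S.vΓ (Γ t)) (τ t)) (𝓝[Ioo 0 L] (0 : ℝ))
            (𝓝 (dot2 (S.vΓ (Γ 0)) (τ 0))) :=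
          tendsto_dot2 hvΓtend ((hτcont 0 hA0mem).mono Ioo_subset_Icc_self)
        have t3 : Tendsto (fun t => dot2 (u - Γ t) (τ t)) (𝓝[Ioo 0 L] (0 : ℝ))
            (𝓝 (dot2 (S.vΓ (Γ 0)) (τ 0))) := by
          refine t2.congr' ?_
          refine eventually_nhdsWithin_of_forall fun x hx => ?_
          show dot2 (S.vΓ (Γ x)) (τ x) = dot2 (u - Γ x) (τ x)
          rw [hττ x hx]
          exact hRH x hx
        exact tendsto_nhds_unique ((hAcont 0 hA0mem).mono Ioo_subset_Icc_self) t3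
      exact hc (by rw [← hA0c]; exact hA00)
    · -- curvature jumps at `m` : contradiction with `C²` regularity
      have hmIoo : m ∈ Ioo 0 L := ⟨hmpos, hmL⟩
      have hleft : ∀ x ∈ Ioo 0 m, deriv (deriv Γ) x = 0 := by
        intro x hx
        by_contra hne
        have hxE : x ∈ E := hmemE.mpr ⟨⟨hx.1, hx.2.trans hmL⟩, hne⟩
        exact absurd (csInf_le hbdd hxE) (not_le.mpr hx.2)
      haveI hmleftne : (𝓝[Ioo 0 m] m).NeBot := by
        refine mem_closure_iff_nhdsWithin_neBot.mp ?_
        rw [closure_Ioo hmpos.ne]; exact ⟨hmpos.le, le_rfl⟩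
      haveI hmne : (𝓝[E] m).NeBot := mem_closure_iff_nhdsWithin_neBot.mp hmcl
      have hcontm : ContinuousAt (deriv (deriv Γ)) m :=
        hcont2.continuousAt (isOpen_Ioo.mem_nhds hmIoo)
      have hΓ''m : deriv (deriv Γ) m = 0 := by
        have h1 : Tendsto (deriv (deriv Γ)) (𝓝[Ioo 0 m] m) (𝓝 (deriv (deriv Γ) m)) :=
          hcontm.continuousWithinAt
        refine tendsto_nhds_unique h1 ?_
        exact Tendsto.congr' (eventually_nhdsWithin_of_forall fun x hx => (hleft x hx).symm)
          tendsto_const_nhds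
      have hGcont : ContinuousOn (fun t => dot2 (u - Γ t) (deriv (deriv Γ) t)) (Ioo 0 L) :=
        continuousOn_dot2 (continuousOn_const.sub (hcontΓ.mono Ioo_subset_Icc_self)) hcont2
      have hGm : dot2 (u - Γ m) (deriv (deriv Γ) m) = 1 := by
        refine tendsto_nhds_unique ((hGcont m hmIoo).mono hEsub) ?_
        exact Tendsto.congr' (eventually_nhdsWithin_of_forall fun x hx => (hGE x hx).symm)
          tendsto_const_nhds
      rw [hΓ''m] at hGm
      simp [dot2] at hGm

end CFX
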